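/- arXiv:0903.2820 — 6 statements merged into one kernel-verified Lean document; each statement's English description precedes it below -/
import Mathlib

section
/- Consider a relay network with source S, destination D, and m ≥ 1 relays R_1, …, R_m, with nonnegative total flows x_SD (source to destination), x_{SR_j} (source to relay j), x_{R_iD} (relay i to destination), and x_{R_iR_j} for i ≠ j (relay i to relay j), satisfying the flow-conservation constraint at every relay i: x_{R_iD} + Σ_{j≠i} x_{R_iR_j} = x_{SR_i} + Σ_{j≠i} x_{R_jR_i}. Then for every subset L ⊆ {1,…,m}, the flow across the cut separating {S} ∪ {R_i : i ∈ L} from the remaining nodes, namely x(C) = x_SD + Σ_{j∉L} x_{SR_j} + Σ_{i∈L} ( x_{R_iD} + Σ_{j∉L} x_{R_iR_j} ), satisfies x(C) ≥ x_SD + Σ_{i=1}^m x_{R_iD} (the flow across the multiple-access cut separating D from all other nodes). -/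
open Finset

/-- **Statement 0.** In an `m`-relay network (`m ≥ 1`) with nonnegative flows
`xSD` (source→destination), `xSR j` (source→relay `j`), `xRD i` (relay `i`→destination)
and `xRR i j` (relay `i`→relay `j`, for `i ≠ j`) satisfying flow conservation at every
relay, the flow across any cut separating `{S} ∪ {R_i : i ∈ L}` from the rest is at
least the flow across the multiple-access cut separating the destination from all other nodes. -/
theorem cut_flow_ge_multiple_access_cut
    (m : ℕ) (hm : 1 ≤ m)
    (xSD : ℝ) (xSR xRD : Fin m → ℝ) (xRR : Fin m → Fin m → ℝ)
    (hxSD : 0 ≤ xSD) (hxSR : ∀ j, 0 ≤ xSR j) (hxRD : ∀ i, 0 ≤ xRD i)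
    (hxRR : ∀ i j, i ≠ j → 0 ≤ xRR i j)
    (hflow : ∀ i, xRD i + ∑ j ∈ univ.filter (fun j => j ≠ i), xRR i j
        = xSR i + ∑ j ∈ univ.filter (fun j => j ≠ i), xRR j i)
    (L : Finset (Fin m)) :
    xSD + ∑ j ∈ Lᶜ, xSR j + ∑ i ∈ L, (xRD i + ∑ j ∈ Lᶜ, xRR i j)
      ≥ xSD + ∑ i, xRD i := by
  -- Flow conservation including the (cancelling) diagonal term
  have hAB : ∀ i, xRD i + ∑ j, xRR i j = xSR i + ∑ j, xRR j i := by
    intro i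
    have h := hflow i
    have e1 : univ.filter (fun j => j ≠ i) = univ.erase i := by
      ext j; simp [Finset.mem_erase, and_comm]
    rw [e1, Finset.sum_erase_eq_sub (mem_univ i),
      Finset.sum_erase_eq_sub (mem_univ i)] at h
    linarith
  -- Sum conservation over i ∈ Lᶜ
  have hsum : ∑ i ∈ Lᶜ, xRD i + ∑ i ∈ Lᶜ, ∑ j, xRR i j
      = ∑ i ∈ Lᶜ, xSR i + ∑ i ∈ Lᶜ, ∑ j, xRR j i := by
    rw [← Finset.sum_add_distrib, ← Finset.sum_add_distrib]
    exact Finset.sum_congr rfl fun i _ => hAB i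
  have hsplit1 : ∑ i ∈ Lᶜ, ∑ j, xRR i j
      = (∑ i ∈ Lᶜ, ∑ j ∈ L, xRR i j) + ∑ i ∈ Lᶜ, ∑ j ∈ Lᶜ, xRR i j := by
    rw [← Finset.sum_add_distrib]
    exact Finset.sum_congr rfl fun i _ => (Finset.sum_add_sum_compl L _).symm
  have hsplit2 : ∑ i ∈ Lᶜ, ∑ j, xRR j i
      = (∑ i ∈ Lᶜ, ∑ j ∈ L, xRR j i) + ∑ i ∈ Lᶜ, ∑ j ∈ Lᶜ, xRR j i := by
    rw [← Finset.sum_add_distrib]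
    exact Finset.sum_congr rfl fun i _ => (Finset.sum_add_sum_compl L _).symm
  have hcc : ∑ i ∈ Lᶜ, ∑ j ∈ Lᶜ, xRR j i = ∑ i ∈ Lᶜ, ∑ j ∈ Lᶜ, xRR i j :=
    Finset.sum_comm
  have hQ : ∑ i ∈ Lᶜ, ∑ j ∈ L, xRR j i = ∑ i ∈ L, ∑ j ∈ Lᶜ, xRR i j :=
    Finset.sum_comm
  have hP : 0 ≤ ∑ i ∈ Lᶜ, ∑ j ∈ L, xRR i j := by
    apply Finset.sum_nonneg; intro i hi
    apply Finset.sum_nonneg; intro j hj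
    exact hxRR i j (fun h => (Finset.mem_compl.mp hi) (h ▸ hj))
  have hdist : ∑ i ∈ L, (xRD i + ∑ j ∈ Lᶜ, xRR i j)
      = ∑ i ∈ L, xRD i + ∑ i ∈ L, ∑ j ∈ Lᶜ, xRR i j := Finset.sum_add_distrib
  have htot : ∑ i, xRD i = ∑ i ∈ L, xRD i + ∑ i ∈ Lᶜ, xRD i :=
    (Finset.sum_add_sum_compl L _).symm
  rw [hsplit1, hsplit2, hcc, hQ] at hsum
  rw [hdist, htot]
  linarith
end

section
/- Let S > 0 and 0 < Z_SR ≤ Z_SD, Z_RD > 0, and let t1 ∈ (0,1], t2 = 1 − t1. Define α1 = (1/(Z_SR·S))·[ (1 + Z_SR·S) / (1 + Z_RD·S/(1 + Z_SD·S))^{t2/t1} − 1 ]. If 0 ≤ α1 ≤ 1, then t1·log(1 + Z_SD·α1·S) + t2·log(1 + (Z_SD + Z_RD)·S) ≤ log(1 + Z_SD·S). -/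
open Real

/-!
Write `A = 1 + Z_SD·S` and `B = 1 + Z_RD·S / A`, so that `1 + (Z_SD + Z_RD)·S = A·B`, and
`x = B^(t2/t1) ≥ 1`. The definition of `α1` says exactly `x·(1 + Z_SR·α1·S) = 1 + Z_SR·S`, and
since `Z_SR ≤ Z_SD` this balance persists as an inequality `x·(1 + Z_SD·α1·S) ≤ A`. Taking logarithms,
`t1·log(1 + Z_SD·α1·S) ≤ t1·log A − t2·log B`, and adding `t2·log(A·B)` gives `log A`.
-/

theorem mul_one_add_mul_le_of_balance {a b x α : ℝ} (ha : 0 < a) (hab : a ≤ b) (hx : 1 ≤ x)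
    (hbal : x * (1 + a * α) = 1 + a) : x * (1 + b * α) ≤ 1 + b := by
  have hslack : 0 ≤ 1 - α * x := by
    have : a * (1 - α * x) = x - 1 := by linarith
    exact nonneg_of_mul_nonneg_right (by linarith) ha
  have : 1 + b - x * (1 + b * α) = (b - a) * (1 - α * x) := by linarith
  nlinarith [mul_nonneg (sub_nonneg.2 hab) hslack]

theorem mul_log_add_mul_log_mul_le_log {t u A B : ℝ} (ht : 0 < t) (hu : 0 < u) (hA : 0 < A)
    (hB : 0 < B) (h : B ^ ((1 - t) / t) * u ≤ A) :
    t * log u + (1 - t) * log (A * B) ≤ log A := by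
  have hlog : (1 - t) / t * log B + log u ≤ log A := by
    rw [← log_rpow hB, ← log_mul (rpow_pos_of_pos hB _).ne' hu.ne']
    exact log_le_log (by positivity) h
  have hscaled : (1 - t) * log B + t * log u ≤ t * log A := by
    have := mul_le_mul_of_nonneg_left hlog ht.le
    rwa [mul_add, ← mul_assoc, mul_div_cancel₀ _ ht.ne'] at this
  rw [log_mul hA.ne' hB.ne']
  linarith

theorem rate_le_direct_of_strong_direct_link_general
    (S ZSD ZSR ZRD t1 t2 : ℝ) (hS : 0 < S) (hZSR : 0 < ZSR) (hZ : ZSR ≤ ZSD)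
    (hZRD : 0 < ZRD) (ht1 : 0 < t1) (ht1' : t1 ≤ 1) (ht2 : t2 = 1 - t1)
    (α1 : ℝ)
    (hα1 : α1 = (1 / (ZSR * S)) *
      ((1 + ZSR * S) / (1 + ZRD * S / (1 + ZSD * S)) ^ (t2 / t1) - 1))
    (hα1nonneg : 0 ≤ α1) :
    t1 * Real.log (1 + ZSD * α1 * S) + t2 * Real.log (1 + (ZSD + ZRD) * S)
      ≤ Real.log (1 + ZSD * S) := by
  have hZSD : 0 < ZSD := hZSR.trans_le hZ
  have hA : 0 < 1 + ZSD * S := by positivity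
  set B := 1 + ZRD * S / (1 + ZSD * S) with hB
  have hB1 : 1 ≤ B := le_add_of_nonneg_right (by positivity)
  have hx1 : 1 ≤ B ^ (t2 / t1) := one_le_rpow hB1 (div_nonneg (by linarith) ht1.le)
  have hbal : B ^ (t2 / t1) * (1 + ZSR * S * α1) = 1 + ZSR * S := by
    rw [hα1]
    field_simp
    ring
  have hkey := mul_one_add_mul_le_of_balance (by positivity)
    (mul_le_mul_of_nonneg_right hZ hS.le) hx1 hbal
  have hAB : 1 + (ZSD + ZRD) * S = (1 + ZSD * S) * B := by
    rw [hB]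
    field_simp
    ring
  subst ht2
  rw [hAB]
  exact mul_log_add_mul_log_mul_le_log ht1 (by positivity) hA (by linarith) (by linarith)

/-- For a three-node relay network with `0 < Z_SR ≤ Z_SD`,
`Z_RD > 0`, `S > 0`, slot lengths `t1 ∈ (0,1]`, `t2 = 1 − t1`, and the power split
`α1 = (1/(Z_SR·S))·[(1 + Z_SR·S)/(1 + Z_RD·S/(1 + Z_SD·S))^(t2/t1) − 1]`,
if `0 ≤ α1 ≤ 1` then
`t1·log(1 + Z_SD·α1·S) + t2·log(1 + (Z_SD + Z_RD)·S) ≤ log(1 + Z_SD·S)`. -/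
theorem rate_le_direct_of_strong_direct_link
    (S ZSD ZSR ZRD t1 t2 : ℝ) (hS : 0 < S) (hZSR : 0 < ZSR) (hZ : ZSR ≤ ZSD)
    (hZRD : 0 < ZRD) (ht1 : 0 < t1) (ht1' : t1 ≤ 1) (ht2 : t2 = 1 - t1)
    (α1 : ℝ)
    (hα1 : α1 = (1 / (ZSR * S)) *
      ((1 + ZSR * S) / (1 + ZRD * S / (1 + ZSD * S)) ^ (t2 / t1) - 1))
    (hα1nonneg : 0 ≤ α1) (hα1le : α1 ≤ 1) :
    t1 * Real.log (1 + ZSD * α1 * S) + t2 * Real.log (1 + (ZSD + ZRD) * S)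
      ≤ Real.log (1 + ZSD * S) :=
  rate_le_direct_of_strong_direct_link_general S ZSD ZSR ZRD t1 t2 hS hZSR hZ hZRD ht1 ht1' ht2 α1
    hα1 hα1nonneg
end

section
/- Suppose 0 < Z_SR ≤ Z_SD and Z_RD > 0, S > 0. Then the supremum of x1 + x2 + x3 over all feasible tuples (t1, t2, α, x1, x2, x3) of the three-node flow optimization problem equals log(1 + Z_SD·S); i.e., when the source–destination gain is at least the source–relay gain, the maximum achievable rate is C(Z_SD·S), achieved by direct transmission. -/
open Real

/-- Shannon-type capacity function `C(x) = log (1 + x)` (natural logarithm). -/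
noncomputable def capC (x : ℝ) : ℝ := Real.log (1 + x)

/-- Feasibility of a tuple `(t1, t2, α, x1, x2, x3)` for the three-node
flow optimization problem with link gains `ZSD, ZSR, ZRD` and transmit SNR `S`. -/
def Feasible (ZSD ZSR ZRD S t1 t2 α x1 x2 x3 : ℝ) : Prop :=
  0 ≤ t1 ∧ 0 ≤ t2 ∧ t1 + t2 = 1 ∧ 0 ≤ α ∧ α ≤ 1 ∧
  0 ≤ x1 ∧ 0 ≤ x2 ∧ 0 ≤ x3 ∧
  x2 ≤ t2 * capC (ZRD * S) ∧
  x3 ≤ t2 * capC (ZSD * S) ∧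
  x2 + x3 ≤ t2 * capC ((ZSD + ZRD) * S) ∧
  (ZSR ≤ ZSD →
    x1 ≤ t1 * capC (ZSD * α * S) ∧
    x2 ≤ t1 * capC (ZSR * (1 - α) * S / (1 + ZSR * α * S))) ∧
  (ZSD < ZSR →
    x1 ≤ t1 * capC (ZSD * α * S / (1 + ZSD * (1 - α) * S)) ∧
    x2 ≤ t1 * capC (ZSR * (1 - α) * S))

/-!
The direct link `S → D` alone achieves `C(Z_SD·S)`: spend the whole interval in the
multiple-access slot with the relay silent. Conversely, in the broadcast slot the
superposition-coding rates satisfy `C(a·p) + C(b·q / (1 + b·p)) ≤ C(a·(p + q))` whenever the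
relay gain `b` is at most the direct gain `a`, so the broadcast slot carries at most
`t1·C(Z_SD·S)`, while the direct link carries at most `t2·C(Z_SD·S)` in the multiple-access slot.
-/

lemma capC_nonneg {x : ℝ} (hx : 0 ≤ x) : 0 ≤ capC x :=
  Real.log_nonneg (by linarith)

lemma capC_le_capC {x y : ℝ} (hx : 0 ≤ x) (hxy : x ≤ y) : capC x ≤ capC y :=
  Real.log_le_log (by linarith) (by linarith)

lemma capC_add_capC_div_le {a b p q : ℝ} (hb : 0 ≤ b) (hba : b ≤ a) (hp : 0 ≤ p)
    (hq : 0 ≤ q) :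
    capC (a * p) + capC (b * q / (1 + b * p)) ≤ capC (a * (p + q)) := by
  have ha : 0 ≤ a := hb.trans hba
  have hbp : 0 < 1 + b * p := by positivity
  have h_one_add : 1 + b * q / (1 + b * p) = (1 + b * (p + q)) / (1 + b * p) := by
    field_simp; ring
  unfold capC
  rw [h_one_add, ← Real.log_mul (by positivity) (by positivity), mul_div_assoc']
  apply Real.log_le_log (by positivity)
  rw [div_le_iff₀ hbp]
  -- the difference of the two sides is `(a - b) * q`
  nlinarith [mul_nonneg (sub_nonneg.2 hba) hq]

section Feasible

variable {ZSD ZSR ZRD S t1 t2 α x1 x2 x3 : ℝ}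

lemma Feasible.broadcast_le (hf : Feasible ZSD ZSR ZRD S t1 t2 α x1 x2 x3)
    (hZSR : 0 ≤ ZSR) (hZ : ZSR ≤ ZSD) (hS : 0 ≤ S) :
    x1 + x2 ≤ t1 * capC (ZSD * S) := by
  obtain ⟨ht1, -, -, hα0, hα1, -, -, -, -, -, -, hbc, -⟩ := hf
  obtain ⟨hx1, hx2⟩ := hbc hZ
  have hsplit : capC (ZSD * (α * S)) + capC (ZSR * ((1 - α) * S) / (1 + ZSR * (α * S)))
      ≤ capC (ZSD * S) := by
    simpa only [← add_mul, add_sub_cancel, one_mul] using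
      capC_add_capC_div_le hZSR hZ (mul_nonneg hα0 hS) (mul_nonneg (sub_nonneg.2 hα1) hS)
  calc x1 + x2 ≤ t1 * capC (ZSD * α * S)
        + t1 * capC (ZSR * (1 - α) * S / (1 + ZSR * α * S)) := add_le_add hx1 hx2
    _ = t1 * (capC (ZSD * (α * S)) + capC (ZSR * ((1 - α) * S) / (1 + ZSR * (α * S)))) := by
      simp only [mul_assoc, mul_add]
    _ ≤ t1 * capC (ZSD * S) := mul_le_mul_of_nonneg_left hsplit ht1

lemma Feasible.rate_le (hf : Feasible ZSD ZSR ZRD S t1 t2 α x1 x2 x3)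
    (hZSR : 0 ≤ ZSR) (hZ : ZSR ≤ ZSD) (hS : 0 ≤ S) :
    x1 + x2 + x3 ≤ capC (ZSD * S) := by
  have hbc := hf.broadcast_le hZSR hZ hS
  obtain ⟨-, -, hsum, -, -, -, -, -, -, hx3, -⟩ := hf
  calc x1 + x2 + x3 ≤ t1 * capC (ZSD * S) + t2 * capC (ZSD * S) := add_le_add hbc hx3
    _ = capC (ZSD * S) := by rw [← add_mul, hsum, one_mul]

end Feasible

lemma feasible_direct {ZSD ZSR ZRD S : ℝ} (hZSD : 0 ≤ ZSD) (hZRD : 0 ≤ ZRD) (hS : 0 ≤ S) :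
    Feasible ZSD ZSR ZRD S 0 1 0 0 0 (capC (ZSD * S)) := by
  have hdirect := capC_nonneg (mul_nonneg hZSD hS)
  refine ⟨le_rfl, zero_le_one, zero_add 1, le_rfl, zero_le_one, le_rfl, le_rfl, hdirect,
    ?_, ?_, ?_, fun _ => ?_, fun _ => ?_⟩
  · simpa using capC_nonneg (mul_nonneg hZRD hS)
  · simp
  · simpa using capC_le_capC (mul_nonneg hZSD hS)
      (mul_le_mul_of_nonneg_right (le_add_of_nonneg_right hZRD) hS)
  all_goals simp

/-- When `0 < Z_SR ≤ Z_SD` the maximum achievable rate of the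
three-node flow optimization problem is `C(Z_SD·S)`, i.e. direct transmission is
optimal. -/
theorem sup_rate_eq_direct_of_strong_direct_link
    (ZSD ZSR ZRD S : ℝ) (hZSR : 0 < ZSR) (hZ : ZSR ≤ ZSD) (hZRD : 0 < ZRD)
    (hS : 0 < S) :
    sSup {x : ℝ | ∃ t1 t2 α x1 x2 x3 : ℝ,
        Feasible ZSD ZSR ZRD S t1 t2 α x1 x2 x3 ∧ x = x1 + x2 + x3}
      = capC (ZSD * S) := by
  apply IsGreatest.csSup_eq
  refine ⟨⟨0, 1, 0, 0, 0, capC (ZSD * S),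
    feasible_direct (hZSR.le.trans hZ) hZRD.le hS.le, by ring⟩, ?_⟩
  rintro _ ⟨t1, t2, α, x1, x2, x3, hf, rfl⟩
  exact hf.rate_le hZSR.le hZ hS.le
end

section
/- Suppose 0 < Z_SD < Z_SR and Z_RD > 0, S > 0, and fix t1, t2 ≥ 0 with t1 + t2 = 1 satisfying t2·C(Z_RD·S/(1 + Z_SD·S)) > t1·C(Z_SR·S). Then the supremum of x1 + x2 + x3 over all feasible tuples (α, x1, x2, x3) (with these fixed slot lengths t1, t2) equals t1·C(Z_SR·S) + t2·C(Z_SD·S), and it is attained at α = 0 (i.e., all broadcast-slot power devoted to the relay flow). -/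
open Real

lemma capC_mono {a b : ℝ} (ha : 0 ≤ a) (hab : a ≤ b) : capC a ≤ capC b :=
  Real.log_le_log (by linarith) (by linarith)

lemma capC_add_le {a b c : ℝ} (ha : 0 ≤ a) (hb : 0 ≤ b)
    (h : (1 + a) * (1 + b) ≤ 1 + c) : capC a + capC b ≤ capC c := by
  have h1 : (0:ℝ) < 1 + a := by linarith
  have h2 : (0:ℝ) < 1 + b := by linarith
  have : capC a + capC b = Real.log ((1 + a) * (1 + b)) :=
    (Real.log_mul (ne_of_gt h1) (ne_of_gt h2)).symm
  rw [this]
  exact Real.log_le_log (by positivity) h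

/-- When `0 < Z_SD < Z_SR`, for fixed slot lengths `t1, t2 ≥ 0`
with `t1 + t2 = 1` and `t2·C(Z_RD·S/(1+Z_SD·S)) > t1·C(Z_SR·S)`, the maximum
achievable rate (over `α, x1, x2, x3`) equals `t1·C(Z_SR·S) + t2·C(Z_SD·S)`,
and it is attained at `α = 0`. -/
theorem sup_rate_fixed_slots_large_t2
    (ZSD ZSR ZRD S t1 t2 : ℝ) (hZSD : 0 < ZSD) (hZ : ZSD < ZSR) (hZRD : 0 < ZRD)
    (hS : 0 < S) (ht1 : 0 ≤ t1) (ht2 : 0 ≤ t2) (ht : t1 + t2 = 1)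
    (hcase : t1 * capC (ZSR * S) < t2 * capC (ZRD * S / (1 + ZSD * S))) :
    IsGreatest {x : ℝ | ∃ α x1 x2 x3 : ℝ,
        Feasible ZSD ZSR ZRD S t1 t2 α x1 x2 x3 ∧ x = x1 + x2 + x3}
      (t1 * capC (ZSR * S) + t2 * capC (ZSD * S))
    ∧ ∃ x1 x2 x3 : ℝ,
        Feasible ZSD ZSR ZRD S t1 t2 0 x1 x2 x3 ∧
        x1 + x2 + x3 = t1 * capC (ZSR * S) + t2 * capC (ZSD * S) := by
  have hZSR : 0 < ZSR := hZSD.trans hZ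
  have hden : (0:ℝ) < 1 + ZSD * S := by positivity
  have hq : 0 ≤ ZRD * S / (1 + ZSD * S) := by positivity
  -- monotonicity : C(ZRD S/(1+ZSD S)) ≤ C(ZRD S)
  have hmono : capC (ZRD * S / (1 + ZSD * S)) ≤ capC (ZRD * S) := by
    apply capC_mono hq
    rw [div_le_iff₀ hden]
    nlinarith [mul_pos hZRD hS, mul_pos hZSD hS]
  -- sum inequality: C(ZRD S/(1+ZSD S)) + C(ZSD S) ≤ C((ZSD+ZRD) S)
  have hsum : capC (ZRD * S / (1 + ZSD * S)) + capC (ZSD * S) ≤ capC ((ZSD + ZRD) * S) := by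
    apply capC_add_le hq (by positivity)
    have : (1 + ZRD * S / (1 + ZSD * S)) * (1 + ZSD * S) = 1 + (ZSD + ZRD) * S := by
      field_simp; ring
    nlinarith [this]
  have hx2nn : 0 ≤ t1 * capC (ZSR * S) := mul_nonneg ht1 (capC_nonneg (by positivity))
  have hx3nn : 0 ≤ t2 * capC (ZSD * S) := mul_nonneg ht2 (capC_nonneg (by positivity))
  have hfeas : Feasible ZSD ZSR ZRD S t1 t2 0 0 (t1 * capC (ZSR * S)) (t2 * capC (ZSD * S)) := by
    refine ⟨ht1, ht2, ht, le_refl 0, zero_le_one, le_refl 0, hx2nn, hx3nn, ?_, le_refl _, ?_, ?_, ?_⟩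
    · calc t1 * capC (ZSR * S) ≤ t2 * capC (ZRD * S / (1 + ZSD * S)) := hcase.le
        _ ≤ t2 * capC (ZRD * S) := by nlinarith
    · calc t1 * capC (ZSR * S) + t2 * capC (ZSD * S)
          ≤ t2 * capC (ZRD * S / (1 + ZSD * S)) + t2 * capC (ZSD * S) := by linarith [hcase.le]
        _ = t2 * (capC (ZRD * S / (1 + ZSD * S)) + capC (ZSD * S)) := by ring
        _ ≤ t2 * capC ((ZSD + ZRD) * S) := by nlinarith
    · intro h; exact absurd h (not_le.mpr hZ)
    · intro _
      constructor
      · have : ZSD * 0 * S / (1 + ZSD * (1 - 0) * S) = 0 := by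
          rw [mul_zero, zero_mul, zero_div]
        rw [this]
        simp [capC]
      · have : ZSR * (1 - 0) * S = ZSR * S := by ring
        rw [this]
  refine ⟨⟨⟨0, 0, t1 * capC (ZSR * S), t2 * capC (ZSD * S), hfeas, by ring⟩, ?_⟩,
    0, t1 * capC (ZSR * S), t2 * capC (ZSD * S), hfeas, by ring⟩
  rintro x ⟨α, x1, x2, x3, ⟨-, -, -, hα0, hα1, hx1, hx2, hx3, -, hx3le, -, -, hbc⟩, rfl⟩
  obtain ⟨h1, h2⟩ := hbc hZ
  set a := ZSD * α * S / (1 + ZSD * (1 - α) * S) with ha_def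
  have hdena : (0:ℝ) < 1 + ZSD * (1 - α) * S := by
    nlinarith [mul_nonneg (mul_nonneg hZSD.le (by linarith : (0:ℝ) ≤ 1 - α)) hS.le]
  have haa : 0 ≤ a := by
    apply div_nonneg _ hdena.le
    positivity
  have hbb : 0 ≤ ZSR * (1 - α) * S := by
    apply mul_nonneg (mul_nonneg hZSR.le (by linarith)) hS.le
  have hkey : capC a + capC (ZSR * (1 - α) * S) ≤ capC (ZSR * S) := by
    apply capC_add_le haa hbb
    rw [ha_def, add_div' _ _ _ (ne_of_gt hdena), div_mul_eq_mul_div, div_le_iff₀ hdena]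
    nlinarith [mul_nonneg (mul_nonneg (sub_nonneg.mpr hZ.le) hα0) hS.le,
      mul_pos hZSD hS, mul_pos hZSR hS]
  have h12 : x1 + x2 ≤ t1 * capC (ZSR * S) := by
    calc x1 + x2 ≤ t1 * capC a + t1 * capC (ZSR * (1 - α) * S) := by linarith
      _ = t1 * (capC a + capC (ZSR * (1 - α) * S)) := by ring
      _ ≤ t1 * capC (ZSR * S) := by nlinarith
  linarith
end

section
/- Let S > 0, 0 < Z_SD < Z_SR, Z_RD > 0. Define t2max = C(Z_SR·S) / ( C(Z_SR·S) + C((Z_SD + Z_RD)·S) − C(Z_SD·S) ) and t1 = 1 − t2max. Then t1·log( (1 + Z_SD·S) / ( 1 + (Z_SD/Z_SR)·[ (1 + Z_RD·S/(1 + Z_SD·S))^{t2max/t1} − 1 ] ) ) + t2max·C((Z_SD + Z_RD)·S) = C(Z_SR·S)·C((Z_SD + Z_RD)·S) / ( C(Z_SR·S) + C((Z_SD + Z_RD)·S) − C(Z_SD·S) ). -/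
open Real

/-- For `S > 0`, `0 < Z_SD < Z_SR`, `Z_RD > 0`, with
`t2max = C(Z_SR·S)/(C(Z_SR·S) + C((Z_SD+Z_RD)·S) − C(Z_SD·S))` and `t1 = 1 − t2max`,
the rate expression evaluated at `t2max` equals
`C(Z_SR·S)·C((Z_SD+Z_RD)·S)/(C(Z_SR·S) + C((Z_SD+Z_RD)·S) − C(Z_SD·S))`. -/
theorem rate_at_t2max
    (S ZSD ZSR ZRD : ℝ) (hS : 0 < S) (hZSD : 0 < ZSD) (hZ : ZSD < ZSR)
    (hZRD : 0 < ZRD)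
    (t2max t1 : ℝ)
    (ht2max : t2max = capC (ZSR * S) /
      (capC (ZSR * S) + capC ((ZSD + ZRD) * S) - capC (ZSD * S)))
    (ht1 : t1 = 1 - t2max) :
    t1 * Real.log ((1 + ZSD * S) /
        (1 + (ZSD / ZSR) *
          ((1 + ZRD * S / (1 + ZSD * S)) ^ (t2max / t1) - 1)))
      + t2max * capC ((ZSD + ZRD) * S)
    = capC (ZSR * S) * capC ((ZSD + ZRD) * S) /
        (capC (ZSR * S) + capC ((ZSD + ZRD) * S) - capC (ZSD * S)) := by
  have hZSR : 0 < ZSR := hZSD.trans hZ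
  set a := capC (ZSR * S) with ha
  set b := capC ((ZSD + ZRD) * S) with hb
  set c := capC (ZSD * S) with hc
  have hp1 : (0:ℝ) < 1 + ZSD * S := by positivity
  have hp2 : (0:ℝ) < 1 + ZSR * S := by positivity
  have hp3 : (0:ℝ) < 1 + (ZSD + ZRD) * S := by positivity
  have hca : c < a := by
    apply Real.log_lt_log hp1
    nlinarith
  have hcb : c < b := by
    apply Real.log_lt_log hp1
    nlinarith
  have ha0 : 0 < a := by
    apply Real.log_pos; nlinarith
  have hD : 0 < a + b - c := by linarith
  have hDne : a + b - c ≠ 0 := ne_of_gt hD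
  have hbc : b - c ≠ 0 := ne_of_gt (by linarith)
  have ht1v : t1 = (b - c) / (a + b - c) := by
    rw [ht1, ht2max]; field_simp; ring
  have ht1ne : t1 ≠ 0 := by
    rw [ht1v]; positivity
  have hratio : t2max / t1 = a / (b - c) := by
    rw [ht2max, ht1v]
    field_simp
  -- evaluate the rpow
  have hx : 1 + ZRD * S / (1 + ZSD * S) = (1 + (ZSD + ZRD) * S) / (1 + ZSD * S) := by
    field_simp; ring
  have hlogx : Real.log (1 + ZRD * S / (1 + ZSD * S)) = b - c := by
    rw [hx, Real.log_div (ne_of_gt hp3) (ne_of_gt hp1)]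
    simp [hb, hc, capC]
  have hxpos : (0:ℝ) < 1 + ZRD * S / (1 + ZSD * S) := by positivity
  have hrpow : (1 + ZRD * S / (1 + ZSD * S)) ^ (t2max / t1) = 1 + ZSR * S := by
    rw [hratio, Real.rpow_def_of_pos hxpos, hlogx]
    have h : (b - c) * (a / (b - c)) = a := by field_simp
    rw [h, ha, capC, Real.exp_log hp2]
  have hden : 1 + (ZSD / ZSR) * ((1 + ZRD * S / (1 + ZSD * S)) ^ (t2max / t1) - 1)
      = 1 + ZSD * S := by
    rw [hrpow]
    field_simp
    ring
  rw [hden, div_self (ne_of_gt hp1), Real.log_one, mul_zero, zero_add, ht2max]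
  ring
end

section
/- Let Z_1, …, Z_n (n ≥ 1) be independent, identically distributed exponential random variables with rate 1 (unit mean), and let 0 < r < 1. Then, as S → ∞, −log P( Z_1 + ⋯ + Z_n < (S^r − 1)/S ) / log S tends to n·(1 − r). -/
open Real Filter MeasureTheory ProbabilityTheory

/-! The event `Z₁ + ⋯ + Zₙ < t` contains `{Zᵢ ≤ t/(n+1) for all i}` and, since the `Zᵢ` are
almost surely nonnegative, is almost contained in `{Zᵢ ≤ t for all i}`. By independence these
have probabilities `(1 - e^{-t/(n+1)})ⁿ` and `(1 - e^{-t})ⁿ`, both equal to `tⁿ` up to a constant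
factor for `t ≤ 1`. The threshold `t = (S^r - 1)/S` is `S^{r-1}` up to a factor `2`, so
`-log P = n(1 - r) log S + O(1)`. -/

open Topology Finset

lemma tendsto_div_of_le_of_le_add {α : Type*} {l : Filter α} {f g : α → ℝ} {L C : ℝ}
    (hg : Tendsto g l atTop) (hfg : ∀ᶠ x in l, L * g x ≤ f x ∧ f x ≤ L * g x + C) :
    Tendsto (fun x => f x / g x) l (𝓝 L) := by
  have hupper : Tendsto (fun x => L + C / g x) l (𝓝 L) := by
    simpa using tendsto_const_nhds.add (tendsto_const_nhds.div_atTop hg)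
  refine tendsto_of_tendsto_of_tendsto_of_le_of_le' tendsto_const_nhds hupper ?_ ?_ <;>
    filter_upwards [hfg, hg.eventually_gt_atTop 0] with x ⟨hlow, hup⟩ hx
  · rwa [le_div_iff₀ hx]
  · rwa [div_le_iff₀ hx, add_mul, div_mul_cancel₀ _ hx.ne']

lemma half_le_one_sub_exp_neg {x : ℝ} (hx0 : 0 ≤ x) (hx1 : x ≤ 1) : x / 2 ≤ 1 - exp (-x) := by
  have hexp : exp (-x) * (x + 1) ≤ 1 := by
    calc exp (-x) * (x + 1) ≤ exp (-x) * exp x := by gcongr; exact add_one_le_exp x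
      _ = 1 := by rw [← exp_add, neg_add_cancel, exp_zero]
  have hle : exp (-x) ≤ 1 := exp_le_one_iff.2 (neg_nonpos.2 hx0)
  nlinarith [mul_nonneg (sub_nonneg.2 hle) (sub_nonneg.2 hx1)]

lemma ae_nonneg_expMeasure {r : ℝ} (hr : 0 < r) : ∀ᵐ x ∂expMeasure r, 0 ≤ x := by
  have := isProbabilityMeasure_expMeasure hr
  refine measure_mono_null (fun x (hx : ¬0 ≤ x) => Set.mem_Iic.2 (not_le.1 hx).le) ?_
  rw [← ofReal_cdf, cdf_expMeasure_eq hr]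
  simp

lemma cdf_expMeasure_one {x : ℝ} (hx : 0 ≤ x) : cdf (expMeasure 1) x = 1 - exp (-x) := by
  simp [cdf_expMeasure_eq one_pos, hx]

section IidSum

variable {Ω ι : Type*} [MeasurableSpace Ω] {P : Measure Ω} {Z : ι → Ω → ℝ}
  {μ : Measure ℝ} [IsProbabilityMeasure μ]

lemma aemeasurable_of_map_eq {i : ι} (hlaw : P.map (Z i) = μ) : AEMeasurable (Z i) P :=
  .of_map_ne_zero (hlaw ▸ IsProbabilityMeasure.ne_zero μ)

lemma measureReal_iInter_le_eq_cdf_pow [Fintype ι] [IsFiniteMeasure P] (hindep : iIndepFun Z P)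
    (hlaw : ∀ i, P.map (Z i) = μ) (c : ℝ) :
    P.real (⋂ i, {ω | Z i ω ≤ c}) = cdf μ c ^ Fintype.card ι := by
  have hZ (i : ι) : P {ω | Z i ω ≤ c} = μ (Set.Iic c) := by
    rw [← hlaw i, Measure.map_apply_of_aemeasurable (aemeasurable_of_map_eq (hlaw i))
      measurableSet_Iic]
    rfl
  rw [measureReal_def, hindep.meas_iInter (s := fun i => {ω | Z i ω ≤ c})
    fun i => ⟨Set.Iic c, measurableSet_Iic, rfl⟩]
  simp [hZ, cdf_eq_real, measureReal_def]

lemma cdf_pow_le_measureReal_sum_lt [Fintype ι] [IsFiniteMeasure P] (hindep : iIndepFun Z P)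
    (hlaw : ∀ i, P.map (Z i) = μ) {t : ℝ} (ht : 0 < t) :
    cdf μ (t / (Fintype.card ι + 1)) ^ Fintype.card ι ≤ P.real {ω | ∑ i, Z i ω < t} := by
  rw [← measureReal_iInter_le_eq_cdf_pow hindep hlaw]
  refine measureReal_mono fun ω hω => ?_
  simp only [Set.mem_iInter, Set.mem_ofPred_eq] at hω ⊢
  calc ∑ i, Z i ω ≤ ∑ _i : ι, t / (Fintype.card ι + 1) := sum_le_sum fun i _ => hω i
    _ = Fintype.card ι / (Fintype.card ι + 1) * t := by
      rw [sum_const, card_univ, nsmul_eq_mul]; ring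
    _ < t := mul_lt_of_lt_one_left ht ((div_lt_one (by positivity)).2 (lt_add_one _))

lemma measureReal_sum_lt_le_cdf_pow [Fintype ι] [IsFiniteMeasure P] (hindep : iIndepFun Z P)
    (hlaw : ∀ i, P.map (Z i) = μ) (hμ : ∀ᵐ x ∂μ, 0 ≤ x) (t : ℝ) :
    P.real {ω | ∑ i, Z i ω < t} ≤ cdf μ t ^ Fintype.card ι := by
  have hZ : ∀ᵐ ω ∂P, ∀ i, 0 ≤ Z i ω := ae_all_iff.2 fun i =>
    ae_of_ae_map (aemeasurable_of_map_eq (hlaw i)) ((hlaw i).symm ▸ hμ)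
  rw [← measureReal_iInter_le_eq_cdf_pow hindep hlaw]
  refine ENNReal.toReal_mono (measure_ne_top _ _) (measure_mono_ae ?_)
  filter_upwards [hZ] with ω hω (hsum : ∑ i, Z i ω < t)
  exact Set.mem_iInter.2 fun i => (single_le_sum (fun j _ => hω j) (mem_univ i)).trans hsum.le

lemma measureReal_sum_lt_bounds_of_iid_exp [Fintype ι] [IsFiniteMeasure P]
    (hindep : iIndepFun Z P) (hlaw : ∀ i, P.map (Z i) = expMeasure 1) {t : ℝ} (ht0 : 0 < t) (ht1 : t ≤ 1) :
    (t / (2 * (Fintype.card ι + 1))) ^ Fintype.card ι ≤ P.real {ω | ∑ i, Z i ω < t} ∧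
      P.real {ω | ∑ i, Z i ω < t} ≤ t ^ Fintype.card ι := by
  have := isProbabilityMeasure_expMeasure one_pos
  have hcard : (1 : ℝ) ≤ Fintype.card ι + 1 := le_add_of_nonneg_left (Nat.cast_nonneg _)
  have hs0 : 0 ≤ t / (Fintype.card ι + 1) := by positivity
  have hs1 : t / (Fintype.card ι + 1) ≤ 1 := (div_le_one (by positivity)).2 (ht1.trans hcard)
  constructor
  · refine le_trans ?_ (cdf_pow_le_measureReal_sum_lt hindep hlaw ht0)
    rw [cdf_expMeasure_one hs0, mul_comm, ← div_div]
    gcongr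
    exact half_le_one_sub_exp_neg hs0 hs1
  · refine (measureReal_sum_lt_le_cdf_pow hindep hlaw (ae_nonneg_expMeasure one_pos) t).trans ?_
    rw [cdf_expMeasure_one ht0.le]
    gcongr
    · exact sub_nonneg.2 (exp_le_one_iff.2 (neg_nonpos.2 ht0.le))
    · linarith [one_sub_le_exp_neg t]

end IidSum

lemma rpow_sub_one_div_bounds {r S : ℝ} (hS : 0 < S) (h2 : 2 ≤ S ^ r) :
    S ^ (r - 1) / 2 ≤ (S ^ r - 1) / S ∧ (S ^ r - 1) / S ≤ S ^ (r - 1) := by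
  rw [rpow_sub_one hS.ne', div_div, mul_comm, ← div_div]
  constructor <;> gcongr <;> linarith

theorem diversity_order_sum_iid_exponential_general
    {Ω : Type*} [MeasurableSpace Ω] (P : Measure Ω) [IsProbabilityMeasure P]
    (n : ℕ) (Z : Fin n → Ω → ℝ)
    (hindep : iIndepFun Z P)
    (hdist : ∀ i, Measure.map (Z i) P = expMeasure 1)
    (r : ℝ) (hr0 : 0 < r) (hr1 : r < 1) :
    Filter.Tendsto
      (fun S : ℝ =>
        -Real.log ((P {ω | (∑ i, Z i ω) < (S ^ r - 1) / S}).toReal) / Real.log S)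
      Filter.atTop (nhds (n * (1 - r))) := by
  refine tendsto_div_of_le_of_le_add (C := n * log (4 * (n + 1))) tendsto_log_atTop ?_
  filter_upwards [eventually_gt_atTop 1, (tendsto_rpow_atTop hr0).eventually_ge_atTop 2]
    with S hS1 hS2
  rw [← measureReal_def]
  obtain ⟨hst, hts⟩ := rpow_sub_one_div_bounds (by linarith) hS2
  set s := S ^ (r - 1)
  set t := (S ^ r - 1) / S
  have hs0 : 0 < s := by positivity
  have ht0 : 0 < t := by linarith
  have hs1 : s ≤ 1 := rpow_le_one_of_one_le_of_nonpos hS1.le (by linarith)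
  obtain ⟨hlow, hup⟩ := measureReal_sum_lt_bounds_of_iid_exp hindep hdist ht0 (hts.trans hs1)
  rw [Fintype.card_fin] at hlow hup
  have hlogs : log s = (r - 1) * log S := log_rpow (by linarith) _
  have hlog_up : log (P.real {ω | ∑ i, Z i ω < t}) ≤ n * log s := by
    rw [← log_pow]
    exact log_le_log (lt_of_lt_of_le (by positivity) hlow) (hup.trans (by gcongr))
  have hlog_low : n * (log s - log (4 * (n + 1))) ≤ log (P.real {ω | ∑ i, Z i ω < t}) := by
    rw [← log_div hs0.ne' (by positivity), ← log_pow]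
    refine log_le_log (by positivity) (le_trans ?_ hlow)
    calc (s / (4 * (n + 1))) ^ n = (s / 2 / (2 * (n + 1))) ^ n := by
          rw [div_div, ← mul_assoc]; norm_num
      _ ≤ (t / (2 * (n + 1))) ^ n := by gcongr
  rw [hlogs] at hlog_up hlog_low
  constructor <;> linarith

/-- If `Z_1, …, Z_n` (`n ≥ 1`) are i.i.d. exponential random
variables with rate `1`, then for `0 < r < 1`,
`−log P(Z_1 + ⋯ + Z_n < (S^r − 1)/S) / log S → n·(1 − r)` as `S → ∞`. -/
theorem diversity_order_sum_iid_exponential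
    {Ω : Type*} [MeasurableSpace Ω] (P : Measure Ω) [IsProbabilityMeasure P]
    (n : ℕ) (hn : 1 ≤ n) (Z : Fin n → Ω → ℝ)
    (hmeas : ∀ i, Measurable (Z i))
    (hindep : iIndepFun Z P)
    (hdist : ∀ i, Measure.map (Z i) P = expMeasure 1)
    (r : ℝ) (hr0 : 0 < r) (hr1 : r < 1) :
    Filter.Tendsto
      (fun S : ℝ =>
        -Real.log ((P {ω | (∑ i, Z i ω) < (S ^ r - 1) / S}).toReal) / Real.log S)
      Filter.atTop (nhds (n * (1 - r))) :=
  diversity_order_sum_iid_exponential_general P n Z hindep hdist r hr0 hr1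
end
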